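/- A Motzkin tree is the skeleton of at least one closed lambda term in de Bruijn form if and only if on every path from the root to a leaf there occurs at least one unary node l (i.e., every leaf has at least one l-node among its ancestors). -/

import Mathlib

/-- Motzkin trees (binary-unary trees): leaf `v`, unary `l`, binary `a`. -/
inductive Mot : Type
  | v : Mot
  | l : Mot → Mot
  | a : Mot → Mot → Mot
deriving DecidableEq

/-- Lambda terms in de Bruijn form. -/
inductive Lam : Type
  | v : Nat → Lam
  | l : Lam → Lam
  | a : Lam → Lam → Lam
deriving DecidableEq

/-- `t` is closed at depth `d`. -/
def Lam.closedAt : Lam → Nat → Prop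
  | .v i, d => i < d
  | .l t, d => t.closedAt (d + 1)
  | .a s t, d => s.closedAt d ∧ t.closedAt d

/-- The Motzkin-tree skeleton of a de Bruijn term. -/
def Lam.skel : Lam → Mot
  | .v _ => .v
  | .l t => .l t.skel
  | .a s t => .a s.skel t.skel

/-- For each leaf (in left-to-right order), the number of unary `l` nodes on the
path from the root to that leaf, starting from `d` accumulated binders. -/
def Mot.leafDepths : Mot → Nat → List Nat
  | .v, d => [d]
  | .l t, d => t.leafDepths (d + 1)
  | .a s t, d => s.leafDepths d ++ t.leafDepths d

/-!
A closed term forces at least one binder above each leaf, since the leaf's index must be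
smaller than the number of binders above it. Conversely, if every leaf lies below some `l`,
labelling every leaf with index `0` (the nearest binder) gives a closed term with the
prescribed skeleton.
-/

theorem Lam.closedAt.leafDepths_skel_pos {t : Lam} {d : Nat} (ht : t.closedAt d) :
    ∀ k ∈ t.skel.leafDepths d, 0 < k := by
  induction t generalizing d with
  | v i =>
    simp only [Lam.skel, Mot.leafDepths, List.mem_singleton, forall_eq]
    exact Nat.zero_lt_of_lt ht
  | l t ih => exact ih ht
  | a s t ihs iht =>
    simp only [Lam.skel, Mot.leafDepths, List.mem_append]
    rintro k (hk | hk)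
    exacts [ihs ht.1 k hk, iht ht.2 k hk]

def Mot.labelZero : Mot → Lam
  | .v => .v 0
  | .l t => .l t.labelZero
  | .a s t => .a s.labelZero t.labelZero

theorem Mot.skel_labelZero (X : Mot) : X.labelZero.skel = X := by
  induction X <;> simp_all [Mot.labelZero, Lam.skel]

theorem Mot.labelZero_closedAt_iff (X : Mot) (d : Nat) :
    X.labelZero.closedAt d ↔ ∀ k ∈ X.leafDepths d, 0 < k := by
  induction X generalizing d with
  | v => simp [Mot.labelZero, Lam.closedAt, Mot.leafDepths]
  | l X ih => exact ih (d + 1)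
  | a X Y ihX ihY =>
    simp only [Mot.labelZero, Lam.closedAt, Mot.leafDepths, List.mem_append, or_imp, forall_and,
      ihX, ihY]

/-- A Motzkin tree is the skeleton of at least one closed de Bruijn lambda term iff
every root-to-leaf path contains at least one unary node `l`. -/
theorem stmt1 (X : Mot) :
    (∃ t : Lam, t.closedAt 0 ∧ t.skel = X) ↔ ∀ d ∈ X.leafDepths 0, 0 < d := by
  constructor
  · rintro ⟨t, ht, rfl⟩
    exact ht.leafDepths_skel_pos
  · intro h
    exact ⟨X.labelZero, (X.labelZero_closedAt_iff 0).2 h, X.skel_labelZero⟩
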